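/- Let n be a linear operator on a Lie algebra (g,[·,·]). For any k ≥ 2, the Nijenhuis torsion of n^k satisfies: T(n^k)(ξ₁,ξ₂) = n^{k−1}[T(n)(n^{k−1}ξ₁,ξ₂) + T(n)(ξ₁,n^{k−1}ξ₂)] + T(n^{k−1})(nξ₁,nξ₂) + n² T(n^{k−1})(ξ₁,ξ₂) − n² T(n^{k−2})(nξ₁,nξ₂), where T(m)(ξ₁,ξ₂) = m([mξ₁,ξ₂]+[ξ₁,mξ₂]−m[ξ₁,ξ₂]) − [mξ₁,mξ₂]. In particular, if T(n) = 0 then T(n^k) = 0 for all k. -/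

import Mathlib

namespace LieRing

variable {R L : Type*} [Semiring R] [LieRing L] [Module R L]

def nijenhuisTorsion (m : Module.End R L) (x y : L) : L :=
  m ⁅m x, y⁆ + m ⁅x, m y⁆ - m (m ⁅x, y⁆) - ⁅m x, m y⁆

@[simp]
theorem nijenhuisTorsion_one (x y : L) : nijenhuisTorsion (1 : Module.End R L) x y = 0 := by
  simp [nijenhuisTorsion]

theorem nijenhuisTorsion_pow_add_two (n : Module.End R L) (k : ℕ) (x y : L) :
    nijenhuisTorsion (n ^ (k + 2)) x y
      = (n ^ (k + 1)) (nijenhuisTorsion n ((n ^ (k + 1)) x) y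
          + nijenhuisTorsion n x ((n ^ (k + 1)) y))
        + nijenhuisTorsion (n ^ (k + 1)) (n x) (n y)
        + (n ^ 2) (nijenhuisTorsion (n ^ (k + 1)) x y)
        - (n ^ 2) (nijenhuisTorsion (n ^ k) (n x) (n y)) := by
  have pow_comm (j : ℕ) (z : L) : n ((n ^ j) z) = (n ^ j) (n z) := by
    rw [← Module.End.mul_apply, ← pow_succ', pow_succ, Module.End.mul_apply]
  -- A formal identity: only the additivity of `n` is used, never a property of the bracket.
  simp only [nijenhuisTorsion, pow_succ, pow_zero, one_mul, Module.End.mul_apply, map_add,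
    map_sub, pow_comm]
  abel

theorem nijenhuisTorsion_pow_eq_zero {n : Module.End R L}
    (hn : ∀ x y : L, nijenhuisTorsion n x y = 0) (k : ℕ) (x y : L) :
    nijenhuisTorsion (n ^ k) x y = 0 := by
  induction k using Nat.twoStepInduction generalizing x y with
  | zero => simp
  | one => simpa using hn x y
  | more k hk hk₁ => simp [nijenhuisTorsion_pow_add_two, hn, hk, hk₁]

end LieRing

open LieRing in
/-- Recurrence for the Nijenhuis torsion of powers `n^k` (`k ≥ 2`); in
particular, if `T(n) = 0` then `T(n^k) = 0` for all `k`. -/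
theorem torsion_pow_recurrence
    {g : Type*} [LieRing g] [LieAlgebra ℝ g]
    (n : Module.End ℝ g)
    (T : Module.End ℝ g → g → g → g)
    (hT : ∀ (m : Module.End ℝ g) (x y : g),
      T m x y = m ⁅m x, y⁆ + m ⁅x, m y⁆ - m (m ⁅x, y⁆) - ⁅m x, m y⁆) :
    (∀ k : ℕ, 2 ≤ k → ∀ x y : g,
      T (n ^ k) x y
        = (n ^ (k - 1)) (T n ((n ^ (k - 1)) x) y + T n x ((n ^ (k - 1)) y))
          + T (n ^ (k - 1)) (n x) (n y)
          + (n ^ 2) (T (n ^ (k - 1)) x y)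
          - (n ^ 2) (T (n ^ (k - 2)) (n x) (n y)))
    ∧ ((∀ x y : g, T n x y = 0) → ∀ (k : ℕ) (x y : g), T (n ^ k) x y = 0) := by
  obtain rfl : T = nijenhuisTorsion := by
    funext m x y
    exact hT m x y
  refine ⟨fun k hk x y => ?_, nijenhuisTorsion_pow_eq_zero⟩
  obtain ⟨k, rfl⟩ := Nat.exists_eq_add_of_le' hk
  exact nijenhuisTorsion_pow_add_two n k x y
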